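/- arXiv:1502.06107 — 2 statements merged into one kernel-verified Lean document; each statement's English description precedes it below -/
import Mathlib

section
/- Let ν be a measure on (0,∞) with ∫₀^∞ (x ∧ 1) ν(dx) < ∞, let b ≥ 0, and define φ(u) = b u + ∫₀^∞ (1 - e^{-u x}) ν(dx) for u > 0. Suppose 0 < α < α' < 1 and there is a constant c > 0 with φ(u) ≤ c u^{α'} for all u ∈ (0,1). Then ∫_{(1,∞)} x^α ν(dx) < ∞. -/
/-!
Choosing `u = 1 / (2t)` and bounding `1 - e^{-ux} ≥ 1 - e^{-1/2}` for `x > t`, Markov's inequality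
turns `φ(u) ≤ c u^{α'}` into the tail estimate `ν(t, ∞) ≤ C t^{-α'}` for `t ≥ 1`. By the layer-cake
formula `∫_{(1,∞)} x^α dν = α ∫_0^∞ t^{α-1} ν((1,∞) ∩ (t,∞)) dt` the moment is finite, since the
integrand is `O(t^{α-1})` near `0` and `O(t^{α-α'-1})` at infinity and `0 < α < α'`.
-/

open MeasureTheory Set Real

lemma one_sub_exp_neg_mul_le_min {u x : ℝ} (hu : u ≤ 1) (hx : 0 ≤ x) :
    1 - exp (-u * x) ≤ min x 1 := by
  refine le_min ?_ (by linarith [exp_pos (-u * x)])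
  nlinarith [add_one_le_exp (-u * x)]

lemma one_sub_exp_neg_mul_nonneg {u x : ℝ} (hu : 0 ≤ u) (hx : 0 ≤ x) : 0 ≤ 1 - exp (-u * x) :=
  sub_nonneg.2 (exp_le_one_iff.2 (by nlinarith))

lemma lintegral_one_sub_exp_neg_mul_eq {ν : Measure ℝ}
    (hν : ∫⁻ x in Ioi (0:ℝ), ENNReal.ofReal (min x 1) ∂ν < ⊤) {u : ℝ} (hu₀ : 0 ≤ u)
    (hu₁ : u ≤ 1) :
    ∫⁻ x in Ioi 0, ENNReal.ofReal (1 - exp (-u * x)) ∂ν =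
      ENNReal.ofReal (∫ x in Ioi 0, (1 - exp (-u * x)) ∂ν) := by
  have hnonneg : 0 ≤ᵐ[ν.restrict (Ioi 0)] fun x ↦ 1 - exp (-u * x) :=
    (ae_restrict_iff' measurableSet_Ioi).2 <| .of_forall fun _ hx ↦
      one_sub_exp_neg_mul_nonneg hu₀ (le_of_lt hx)
  have hlintegral_lt_top : ∫⁻ x in Ioi 0, ENNReal.ofReal (1 - exp (-u * x)) ∂ν < ⊤ :=
    hν.trans_le' <| setLIntegral_mono (by fun_prop) fun x (hx : 0 < x) ↦
      ENNReal.ofReal_le_ofReal (one_sub_exp_neg_mul_le_min hu₁ hx.le)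
  have hint : IntegrableOn (fun x ↦ 1 - exp (-u * x)) (Ioi 0) ν :=
    ⟨by fun_prop, (hasFiniteIntegral_iff_ofReal hnonneg).2 hlintegral_lt_top⟩
  exact (ofReal_integral_eq_lintegral_ofReal hint hnonneg).symm

lemma ofReal_mul_measure_Ioi_le_lintegral_one_sub_exp (ν : Measure ℝ) {t u : ℝ} (ht : 0 ≤ t)
    (hu : 0 ≤ u) :
    ENNReal.ofReal (1 - exp (-u * t)) * ν (Ioi t) ≤
      ∫⁻ x in Ioi 0, ENNReal.ofReal (1 - exp (-u * x)) ∂ν := calc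
  _ = ∫⁻ _ in Ioi t, ENNReal.ofReal (1 - exp (-u * t)) ∂ν := (setLIntegral_const _ _).symm
  _ ≤ ∫⁻ x in Ioi t, ENNReal.ofReal (1 - exp (-u * x)) ∂ν :=
    setLIntegral_mono (by fun_prop) fun x (hx : t < x) ↦
      ENNReal.ofReal_le_ofReal (sub_le_sub_left (exp_le_exp.2 (by nlinarith)) 1)
  _ ≤ _ := lintegral_mono_set (Ioi_subset_Ioi ht)

lemma measure_Ioi_le_of_integral_one_sub_exp_le {ν : Measure ℝ}
    (hν : ∫⁻ x in Ioi (0:ℝ), ENNReal.ofReal (min x 1) ∂ν < ⊤) {c β : ℝ} (hc : 0 ≤ c) (hβ : 0 ≤ β)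
    (hlaplace : ∀ u ∈ Ioo (0:ℝ) 1, ∫ x in Ioi 0, (1 - exp (-u * x)) ∂ν ≤ c * u ^ β) {t : ℝ}
    (ht : 1 ≤ t) :
    ν (Ioi t) ≤ ENNReal.ofReal (c / (1 - exp (-(1 / 2))) * t ^ (-β)) := by
  have hd : 0 < 1 - exp (-(1 / 2)) := by simp [exp_lt_one_iff]
  have hu : (2 * t)⁻¹ ∈ Ioo 0 1 := ⟨by positivity, inv_lt_one_of_one_lt₀ (by linarith)⟩
  have hut : -(2 * t)⁻¹ * t = -(1 / 2) := by field_simp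
  rw [div_mul_eq_mul_div, ENNReal.ofReal_div_of_pos hd,
    ENNReal.le_div_iff_mul_le (.inl (ENNReal.ofReal_pos.2 hd).ne') (.inl ENNReal.ofReal_ne_top),
    mul_comm]
  calc ENNReal.ofReal (1 - exp (-(1 / 2))) * ν (Ioi t)
      ≤ ∫⁻ x in Ioi 0, ENNReal.ofReal (1 - exp (-(2 * t)⁻¹ * x)) ∂ν := by
        simpa only [hut] using
          ofReal_mul_measure_Ioi_le_lintegral_one_sub_exp ν (t := t) (by linarith) hu.1.le
    _ = ENNReal.ofReal (∫ x in Ioi 0, (1 - exp (-(2 * t)⁻¹ * x)) ∂ν) :=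
        lintegral_one_sub_exp_neg_mul_eq hν hu.1.le hu.2.le
    _ ≤ ENNReal.ofReal (c * t ^ (-β)) := by
        gcongr
        refine (hlaplace _ hu).trans ?_
        rw [inv_rpow (by positivity), ← rpow_neg (by positivity)]
        exact mul_le_mul_of_nonneg_left
          (rpow_le_rpow_of_nonpos (by linarith) (by linarith) (by linarith)) hc

lemma setLIntegral_ofReal_lt_top_of_le {X : Type*} [MeasurableSpace X] {μ : Measure X}
    {s : Set X} {F : X → ENNReal} {g : X → ℝ}
    (hg : IntegrableOn g s μ) (hF : ∀ t ∈ s, F t ≤ ENNReal.ofReal (g t)) (hs : MeasurableSet s) :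
    ∫⁻ t in s, F t ∂μ < ⊤ :=
  (setLIntegral_mono' hs hF).trans_lt hg.lintegral_lt_top

theorem lintegral_Ioi_one_rpow_lt_top_of_measure_Ioi_le (μ : Measure ℝ) {α β C : ℝ} (hα : 0 < α)
    (hαβ : α < β) (htail : ∀ t ≥ 1, μ (Ioi t) ≤ ENNReal.ofReal (C * t ^ (-β))) :
    ∫⁻ x in Ioi 1, ENNReal.ofReal (x ^ α) ∂μ < ⊤ := by
  have hnonneg : 0 ≤ᵐ[μ.restrict (Ioi 1)] fun x ↦ x :=
    (ae_restrict_iff' measurableSet_Ioi).2 <| .of_forall fun x (hx : 1 < x) ↦ by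
      simp only [Pi.zero_apply]; linarith
  have hlevel (t : ℝ) : μ.restrict (Ioi 1) {x | t < x} = μ (Ioi (max t 1)) := by
    change μ.restrict (Ioi 1) (Ioi t) = _
    rw [Measure.restrict_apply measurableSet_Ioi, Ioi_inter_Ioi]
  rw [lintegral_rpow_eq_lintegral_meas_lt_mul _ hnonneg measurable_id.aemeasurable hα]
  refine ENNReal.mul_lt_top ENNReal.ofReal_lt_top ?_
  simp only [hlevel]
  rw [← Ioc_union_Ioi_eq_Ioi zero_le_one]
  refine (lintegral_union_le _ _ _).trans_lt (ENNReal.add_lt_top.2 ⟨?_, ?_⟩)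
  · refine setLIntegral_ofReal_lt_top_of_le (g := fun t ↦ C * t ^ (α - 1))
      ((intervalIntegral.intervalIntegrable_rpow' (by linarith)).1.const_mul C)
      (fun t ht ↦ ?_) measurableSet_Ioc
    rw [max_eq_right ht.2, ENNReal.ofReal_mul' (rpow_nonneg ht.1.le _)]
    gcongr
    simpa using htail 1 le_rfl
  · refine setLIntegral_ofReal_lt_top_of_le (g := fun t ↦ C * t ^ (α - 1 - β))
      ((integrableOn_Ioi_rpow_of_lt (by linarith) zero_lt_one).const_mul C)
      (fun t (ht : 1 < t) ↦ ?_) measurableSet_Ioi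
    rw [max_eq_left ht.le, sub_eq_add_neg (α - 1), rpow_add (by linarith), mul_comm (t ^ _),
      ← mul_assoc, ENNReal.ofReal_mul' (rpow_nonneg (by linarith) _)]
    gcongr
    exact htail t ht.le

theorem levy_moment_finite_of_bernstein_bound_general (ν : Measure ℝ) (b α α' c : ℝ) (hb : 0 ≤ b)
    (hν : ∫⁻ x in Set.Ioi (0:ℝ), ENNReal.ofReal (min x 1) ∂ν < ⊤)
    (hα : 0 < α) (hαα' : α < α') (hc : 0 < c)
    (φ : ℝ → ℝ)
    (hφ : ∀ u > 0, φ u = b * u + ∫ x in Set.Ioi (0:ℝ), (1 - Real.exp (-u * x)) ∂ν)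
    (hbound : ∀ u ∈ Set.Ioo (0:ℝ) 1, φ u ≤ c * u ^ α') :
    ∫⁻ x in Set.Ioi (1:ℝ), ENNReal.ofReal (x ^ α) ∂ν < ⊤ := by
  have hlaplace : ∀ u ∈ Ioo (0:ℝ) 1, ∫ x in Ioi 0, (1 - exp (-u * x)) ∂ν ≤ c * u ^ α' :=
    fun u hu ↦ by
      have := hbound u hu
      rw [hφ u hu.1] at this
      nlinarith [mul_nonneg hb hu.1.le]
  exact lintegral_Ioi_one_rpow_lt_top_of_measure_Ioi_le ν hα hαα' fun t ht ↦
    measure_Ioi_le_of_integral_one_sub_exp_le hν hc.le (hα.trans hαα').le hlaplace ht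

theorem levy_moment_finite_of_bernstein_bound (ν : Measure ℝ) (b α α' c : ℝ) (hb : 0 ≤ b)
    (hν : ∫⁻ x in Set.Ioi (0:ℝ), ENNReal.ofReal (min x 1) ∂ν < ⊤)
    (hα : 0 < α) (hαα' : α < α') (hα' : α' < 1) (hc : 0 < c)
    (φ : ℝ → ℝ)
    (hφ : ∀ u > 0, φ u = b * u + ∫ x in Set.Ioi (0:ℝ), (1 - Real.exp (-u * x)) ∂ν)
    (hbound : ∀ u ∈ Set.Ioo (0:ℝ) 1, φ u ≤ c * u ^ α') :
    ∫⁻ x in Set.Ioi (1:ℝ), ENNReal.ofReal (x ^ α) ∂ν < ⊤ :=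
  levy_moment_finite_of_bernstein_bound_general ν b α α' c hb hν hα hαα' hc φ hφ hbound
end

section
/- Let (Ω, P) be a probability space, S : Ω → [0,∞) a random variable, κ a real number, and f : [0,∞) → [0,∞) a measurable function. Then E[∫₀^S f(t) · [P(S ≥ t)]^{κ-1} dt] = ∫₀^∞ f(t) · [P(S ≥ t)]^κ dt, where the convention 0^0 = 1 is used and both sides may be infinite, provided P(S ≥ t) > 0 for Lebesgue-a.e. t with f(t) > 0 in case κ - 1 < 0; in particular the identity holds when κ ≥ 1. -/
open MeasureTheory Set Real

theorem expectation_weighted_time_change {Ω : Type*} [MeasurableSpace Ω]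
    (P : Measure Ω) [IsProbabilityMeasure P]
    (S : Ω → ℝ) (hS : Measurable S) (hS0 : ∀ ω, 0 ≤ S ω)
    (κ : ℝ) (f : ℝ → ℝ) (hf : Measurable f) (hf0 : ∀ t, 0 ≤ f t)
    (hpos : κ - 1 < 0 →
      ∀ᵐ t ∂(volume.restrict (Set.Ioi (0:ℝ))), 0 < f t → 0 < P {ω | t ≤ S ω}) :
    ∫⁻ ω, (∫⁻ t in Set.Ioo 0 (S ω),
        ENNReal.ofReal (f t) * (P {ω' | t ≤ S ω'}) ^ (κ - 1)) ∂P
      = ∫⁻ t in Set.Ioi (0:ℝ), ENNReal.ofReal (f t) * (P {ω' | t ≤ S ω'}) ^ κ := by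
  classical
  set G : ℝ → ENNReal := fun t => P {ω' | t ≤ S ω'} with hGdef
  have hGanti : Antitone G := fun a b hab =>
    measure_mono fun ω h => le_trans hab h
  have hGmeas : Measurable G := hGanti.measurable
  set g : ℝ → ENNReal := fun t => ENNReal.ofReal (f t) * G t ^ (κ - 1) with hgdef
  have hgmeas : Measurable g :=
    (ENNReal.measurable_ofReal.comp hf).mul
      (ENNReal.continuous_rpow_const.measurable.comp hGmeas)
  -- rewrite the inner integral as an integral over Ioi 0 with an indicator
  have key : ∀ ω, (∫⁻ t in Set.Ioo 0 (S ω), g t)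
      = ∫⁻ t in Set.Ioi (0:ℝ), (Set.Iio (S ω)).indicator g t := by
    intro ω
    rw [lintegral_indicator measurableSet_Iio g, Measure.restrict_restrict measurableSet_Iio,
      Set.Iio_inter_Ioi, Set.Ioo]
  simp_rw [key]
  -- swap the integrals (Tonelli)
  rw [lintegral_lintegral_swap]
  · -- compute inner ω-integral
    have inner : ∀ t, (∫⁻ ω, (Set.Iio (S ω)).indicator g t ∂P) = g t * P {ω | t < S ω} := by
      intro t
      have : ∀ ω, (Set.Iio (S ω)).indicator g t = Set.indicator {ω | t < S ω} (fun _ => g t) ω := by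
        intro ω
        by_cases h : t < S ω <;> simp [Set.indicator_apply, h]
      simp_rw [this]
      rw [lintegral_indicator_const]
      exact hS measurableSet_Ioi
    simp_rw [inner]
    -- a.e. equality of integrands
    apply lintegral_congr_ae
    have hcount : Set.Countable {t : ℝ | 0 < P {ω | S ω = t}} :=
      Measure.countable_meas_level_set_pos hS
    have hnull : ∀ᵐ t ∂(volume.restrict (Set.Ioi (0:ℝ))), P {ω | S ω = t} = 0 := by
      apply ae_restrict_of_ae
      have : volume {t : ℝ | 0 < P {ω | S ω = t}} = 0 := hcount.measure_zero _
      filter_upwards [measure_eq_zero_iff_ae_notMem.mp this] with t ht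
      simpa using ht
    have hpos' : ∀ᵐ t ∂(volume.restrict (Set.Ioi (0:ℝ))), κ - 1 < 0 → (0 < f t → 0 < G t) := by
      rcases lt_or_ge (κ - 1) 0 with h | h
      · filter_upwards [hpos h] with t ht _ hft using ht hft
      · filter_upwards with t h' using absurd h' (not_lt.mpr h)
    filter_upwards [hnull, hpos'] with t hatom hkt
    show g t * P {ω | t < S ω} = ENNReal.ofReal (f t) * G t ^ κ
    have hGeq : P {ω | t < S ω} = G t := by
      refine le_antisymm (measure_mono fun ω (h : t < S ω) => le_of_lt h) ?_
      calc G t = P ({ω | t < S ω} ∪ {ω | S ω = t}) := by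
            have : {ω' | t ≤ S ω'} = {ω | t < S ω} ∪ {ω | S ω = t} := by
              ext ω
              simp only [Set.mem_setOf_eq, Set.mem_union]
              constructor
              · intro h
                rcases lt_or_eq_of_le h with h | h
                · exact Or.inl h
                · exact Or.inr h.symm
              · rintro (h | h)
                · exact le_of_lt h
                · exact le_of_eq h.symm
            simp only [hGdef, this]
        _ ≤ P {ω | t < S ω} + P {ω | S ω = t} := measure_union_le _ _
        _ = P {ω | t < S ω} := by rw [hatom, add_zero]
    rw [hGeq, hgdef]
    rcases eq_or_ne (f t) 0 with hft | hft
    · simp [hft]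
    have hft' : 0 < f t := lt_of_le_of_ne (hf0 t) (Ne.symm hft)
    rcases eq_or_ne (G t) 0 with hG0 | hG0
    · -- G t = 0 forces κ - 1 ≥ 0
      have hk : 0 ≤ κ - 1 := by
        by_contra h
        exact absurd (hkt (lt_of_not_ge h) hft') (by simp [hG0])
      rcases eq_or_lt_of_le hk with hk1 | hk1
      · have hκ : κ = 1 := by linarith
        simp [hG0, ← hk1, hκ]
      · simp [hG0, ENNReal.zero_rpow_of_pos hk1,
          ENNReal.zero_rpow_of_pos (show (0:ℝ) < κ by linarith)]
    · rw [mul_assoc]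
      congr 1
      have : G t ^ (κ - 1) * G t = G t ^ (κ - 1) * G t ^ (1 : ℝ) := by
        rw [ENNReal.rpow_one]
      rw [this, ← ENNReal.rpow_add _ _ hG0 (ne_top_of_le_ne_top (measure_ne_top P _) le_rfl)]
      norm_num
  · -- measurability of the uncurried function
    have hset : MeasurableSet {p : Ω × ℝ | p.2 < S p.1} :=
      measurableSet_lt measurable_snd (hS.comp measurable_fst)
    have : (Function.uncurry fun ω t => (Set.Iio (S ω)).indicator g t)
        = Set.indicator {p : Ω × ℝ | p.2 < S p.1} (fun p => g p.2) := by
      ext p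
      by_cases h : p.2 < S p.1 <;> simp [Function.uncurry, Set.indicator_apply, h]
    rw [this]
    exact ((hgmeas.comp measurable_snd).indicator hset).aemeasurable
end
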